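/- arXiv:1906.10093 — 3 statements merged into one kernel-verified Lean document; each statement's English description precedes it below -/
import Mathlib

section
/- For every unambiguous Büchi automaton A = (Q, Σ, δ, Q₀, F) there exists an unambiguous Büchi automaton A′ = (Q′, Σ, δ′, Q₀′, F′) over the same alphabet Σ such that |Q′| ≤ |Q|, |δ′| ≤ |δ|, L(A′) = L(A), and A′ contains no diamond. -/
open Matrix MeasureTheory

attribute [local instance] Classical.propDecidable

/-- A Büchi automaton with state space `Q` and alphabet `A`. -/
structure BA (Q A : Type) where
  delta : Q → A → Set Q
  init : Set Q
  acc : Set Q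

namespace BA

variable {Q A : Type}

/-- A run of the automaton on an infinite word. -/
def InfRun (𝒜 : BA Q A) (w : ℕ → A) (ρ : ℕ → Q) : Prop :=
  ρ 0 ∈ 𝒜.init ∧ ∀ i, ρ (i + 1) ∈ 𝒜.delta (ρ i) (w i)

/-- An accepting run: some accepting state occurs infinitely often. -/
def AccRun (𝒜 : BA Q A) (w : ℕ → A) (ρ : ℕ → Q) : Prop :=
  𝒜.InfRun w ρ ∧ ∃ q ∈ 𝒜.acc, {i : ℕ | ρ i = q}.Infinite

/-- The language of infinite words having at least one accepting run. -/
def Lang (𝒜 : BA Q A) : Set (ℕ → A) := {w | ∃ ρ, 𝒜.AccRun w ρ}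

/-- Unambiguous: every infinite word has at most one accepting run. -/
def Unambiguous (𝒜 : BA Q A) : Prop :=
  ∀ w ρ₁ ρ₂, 𝒜.AccRun w ρ₁ → 𝒜.AccRun w ρ₂ → ρ₁ = ρ₂

/-- `𝒜.IsRun q w ρ r` : the list `ρ` (of length `|w| + 1`) is a run for the
finite word `w` from `q` to `r`. -/
def IsRun (𝒜 : BA Q A) : Q → List A → List Q → Q → Prop
  | q, [], ρ, r => q = r ∧ ρ = [q]
  | q, a :: w, ρ, r => ∃ q' ρ', ρ = q :: ρ' ∧ q' ∈ 𝒜.delta q a ∧ 𝒜.IsRun q' w ρ' r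

/-- A diamond: two distinct runs for the same finite word with the
same start and end states. -/
def HasDiamond (𝒜 : BA Q A) : Prop :=
  ∃ q r w ρ₁ ρ₂, ρ₁ ≠ ρ₂ ∧ 𝒜.IsRun q w ρ₁ r ∧ 𝒜.IsRun q w ρ₂ r

/-- Every state is reachable from some initial state. -/
def AllReachable (𝒜 : BA Q A) : Prop :=
  ∀ q, ∃ q₀ ∈ 𝒜.init, ∃ w ρ, 𝒜.IsRun q₀ w ρ q

/-- The automaton `𝒜` with `q` as the only initial state. -/
def fromState (𝒜 : BA Q A) (q : Q) : BA Q A := { 𝒜 with init := {q} }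

/-- `|δ|`: the number of pairs `(q, r)` such that `r ∈ δ(q, a)` for some letter `a`. -/
noncomputable def numTrans (𝒜 : BA Q A) : ℕ := {p : Q × Q | ∃ a, p.2 ∈ 𝒜.delta p.1 a}.ncard

end BA

/-- A (row-)stochastic matrix with nonnegative entries. -/
def IsMarkov {S : Type} [Fintype S] (M : Matrix S S ℝ) : Prop :=
  (∀ s t, 0 ≤ M s t) ∧ ∀ s, ∑ t, M s t = 1

/-- `Pr s` is the probability measure of the Markov chain `M` started at `s`:
the cylinder of the finite sequence `u 0, …, u n` has measure
`M (u 0) (u 1) ⋯ M (u (n-1)) (u n)` if `u 0 = s`, and `0` otherwise. -/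
def CylinderSpec {S : Type} [Fintype S] [MeasurableSpace S]
    (M : Matrix S S ℝ) (Pr : S → Measure (ℕ → S)) : Prop :=
  ∀ (s : S) (n : ℕ) (u : ℕ → S),
    Pr s {ω | ∀ i ≤ n, ω i = u i} =
      if u 0 = s then ENNReal.ofReal (∏ i ∈ Finset.range n, M (u i) (u (i + 1))) else 0

/-- The vector `z`, given by `z ⟨q, s⟩ = Pr_s (L(𝒜_q))`. -/
noncomputable def zvec {Q S : Type} [MeasurableSpace S]
    (𝒜 : BA Q S) (Pr : S → Measure (ℕ → S)) : Q × S → ℝ :=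
  fun p => ((Pr p.2) ((𝒜.fromState p.1).Lang)).toReal

/-- The matrix `B` built from the automaton `𝒜` and the Markov chain `M`. -/
noncomputable def Bmat {Q S : Type} (𝒜 : BA Q S) (M : Matrix S S ℝ) :
    Matrix (Q × S) (Q × S) ℝ :=
  Matrix.of fun p p' => if p'.1 ∈ 𝒜.delta p.1 p.2 then M p.2 p'.2 else 0

/-- The spectral radius of a real square matrix: the largest absolute value of
its complex eigenvalues. -/
noncomputable def specRad {n : Type} [Fintype n] [DecidableEq n] (N : Matrix n n ℝ) : ℝ :=
  sSup {x : ℝ | ∃ c ∈ spectrum ℂ (N.map Complex.ofReal), x = ‖c‖}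

/-- `D` is a strongly connected component of the graph of the nonnegative matrix `N`
(edges are the positive entries). -/
def IsSCC {V : Type} (N : Matrix V V ℝ) (D : Set V) : Prop :=
  ∃ v, D = {w | Relation.ReflTransGen (fun a b => 0 < N a b) v w ∧
               Relation.ReflTransGen (fun a b => 0 < N a b) w v}

/-- The submatrix `N_{D,D}`. -/
def subMat {V : Type} (N : Matrix V V ℝ) (D : Set V) : Matrix ↥D ↥D ℝ :=
  N.submatrix (Subtype.val) (Subtype.val)

/-- An SCC `D` of `B` is recurrent if `ρ(B_{D,D}) = 1`. -/
def RecurrentSCC {Q S : Type} [Fintype Q] [Fintype S]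
    (𝒜 : BA Q S) (M : Matrix S S ℝ) (D : Set (Q × S)) : Prop :=
  specRad (subMat (Bmat 𝒜 M) D) = 1

/-- An SCC `D` of `B` is accepting if it contains a pair `⟨q, s⟩` with `q` accepting. -/
def AcceptingSCC {Q S : Type} (𝒜 : BA Q S) (D : Set (Q × S)) : Prop :=
  ∃ p ∈ D, p.1 ∈ 𝒜.acc

/-- One step of the fibre operation: `f ⇒ t`. -/
def fibStep {Q S : Type} (𝒜 : BA Q S) (D : Set (Q × S)) (f : Set (Q × S)) (t : S) :
    Set (Q × S) :=
  {p ∈ D | p.2 = t ∧ ∃ e ∈ f, p.1 ∈ 𝒜.delta e.1 e.2}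

/-- The fibre operation along a word: `f ⇒ w`. -/
def fibRun {Q S : Type} (𝒜 : BA Q S) (D : Set (Q × S)) (f : Set (Q × S)) :
    List S → Set (Q × S)
  | [] => f
  | t :: w => fibRun 𝒜 D (fibStep 𝒜 D f t) w

/-- A word `s₁ ⋯ sₙ` is enabled if `M_{sᵢ, sᵢ₊₁} > 0` for all `i < n`. -/
def Enabled {S : Type} (M : Matrix S S ℝ) (l : List S) : Prop :=
  l.Chain' fun a b => 0 < M a b

/-- `c` is a cut: `c = d ⇒ v` for some `d ∈ D` and enabled `v`, and `c ⇒ w`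
is nonempty for every `w` for which it is defined. -/
def IsCut {Q S : Type} (𝒜 : BA Q S) (M : Matrix S S ℝ) (D : Set (Q × S))
    (c : Set (Q × S)) : Prop :=
  ∃ d ∈ D, ∃ v : List S, Enabled M (d.2 :: v) ∧ c = fibRun 𝒜 D {d} v ∧
    ∀ w : List S, Enabled M (v.getLastD d.2 :: w) → fibRun 𝒜 D c w ≠ ∅

/-- The co-reachability set `Co(d)`: those `e ∈ D` with `{d, e} ⊆ d ⇒ w` for some `w`. -/
def Co {Q S : Type} (𝒜 : BA Q S) (M : Matrix S S ℝ) (D : Set (Q × S)) (d : Q × S) :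
    Set (Q × S) :=
  {e ∈ D | ∃ w : List S, Enabled M (d.2 :: w) ∧
    d ∈ fibRun 𝒜 D {d} w ∧ e ∈ fibRun 𝒜 D {d} w}

/-- The matrix `Δ(t)` over `D`. -/
noncomputable def Delta {Q S : Type} (𝒜 : BA Q S) (M : Matrix S S ℝ) (D : Set (Q × S))
    (t : S) : Matrix ↥D ↥D ℝ :=
  Matrix.of fun p p' =>
    if (p' : Q × S).2 = t ∧ 0 < M (p : Q × S).2 t ∧
       (p' : Q × S).1 ∈ 𝒜.delta (p : Q × S).1 (p : Q × S).2
    then 1 else 0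

/-- The matrix `Δ(w)` for a word `w` (`Δ(ε)` is the identity). -/
noncomputable def DeltaW {Q S : Type} [Fintype Q] [Fintype S]
    (𝒜 : BA Q S) (M : Matrix S S ℝ) (D : Set (Q × S)) : List S → Matrix ↥D ↥D ℝ
  | [] => 1
  | t :: w => Delta 𝒜 M D t * DeltaW 𝒜 M D w

/-- The matrix `Δ′(t)` over `D`. -/
noncomputable def Delta' {Q S : Type} (D : Set (Q × S)) (t : S) : Matrix ↥D ↥D ℝ :=
  Matrix.of fun p p' => if p = p' ∧ (p : Q × S).2 = t then 1 else 0

/-- The vector space `V(s)` spanned by the vectors `Δ′(s) Δ(w) y` for all words `w`. -/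
noncomputable def Vspace {Q S : Type} [Fintype Q] [Fintype S]
    (𝒜 : BA Q S) (M : Matrix S S ℝ) (D : Set (Q × S)) (y : ↥D → ℝ) (s : S) :
    Submodule ℝ (↥D → ℝ) :=
  Submodule.span ℝ {x : ↥D → ℝ | ∃ w : List S, x = (Delta' D s * DeltaW 𝒜 M D w).mulVec y}

/-- A vector `μ ∈ ℝ^D` is a fibre over `s` if it vanishes outside `Q × {s}`. -/
def IsFibreVec {Q S : Type} (D : Set (Q × S)) (μ : ↥D → ℝ) (s : S) : Prop :=
  ∀ p : ↥D, (p : Q × S).2 ≠ s → μ p = 0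

/-- A pseudo-cut over `s` (with respect to the vector `zD`): a fibre `μ` over `s` with
`μᵀ Δ(w) zD = μᵀ zD` for all `w` such that `s w` is enabled. -/
def IsPseudoCut {Q S : Type} [Fintype Q] [Fintype S]
    (𝒜 : BA Q S) (M : Matrix S S ℝ) (D : Set (Q × S)) (zD : ↥D → ℝ)
    (μ : ↥D → ℝ) (s : S) : Prop :=
  IsFibreVec D μ s ∧
  ∀ w : List S, Enabled M (s :: w) → μ ⬝ᵥ (DeltaW 𝒜 M D w).mulVec zD = μ ⬝ᵥ zD

/-- A `Co(d)`-pseudo-cut: a pseudo-cut over `d.2` that is nonzero at `d` and vanishes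
outside `Co(d)`. -/
def IsCoPseudoCut {Q S : Type} [Fintype Q] [Fintype S]
    (𝒜 : BA Q S) (M : Matrix S S ℝ) (D : Set (Q × S)) (zD : ↥D → ℝ)
    (d : Q × S) (hd : d ∈ D) (μ : ↥D → ℝ) : Prop :=
  IsPseudoCut 𝒜 M D zD μ d.2 ∧ μ ⟨d, hd⟩ ≠ 0 ∧
  ∀ e : ↥D, (e : Q × S) ∉ Co 𝒜 M D d → μ e = 0

/-- Auxiliary order: shortlex on reversed words. -/
def revLT {S : Type} [LinearOrder S] : List S → List S → Prop
  | [], u => u ≠ []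
  | _ :: _, [] => False
  | a :: v, b :: w =>
      (a :: v).length < (b :: w).length ∨
      ((a :: v).length = (b :: w).length ∧ (a < b ∨ (a = b ∧ revLT v w)))

/-- The order `≪` on words: shortlex, but with words read from right to left. -/
def wordLT {S : Type} [LinearOrder S] (u v : List S) : Prop :=
  revLT u.reverse v.reverse

/-!
Restrict the automaton to its useful states, those lying on some accepting run; this keeps the
language and unambiguity and can only shrink `Q` and `δ`. A diamond `q ⇒ r` between useful states
extends, through an initial run to `q` and an accepting run from `r`, to two distinct accepting
runs on one word, so a trim UBA has no diamond.
-/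

lemma Set.infinite_setOf_append_stream_eq {α : Type} {s : Stream' α} {a : α}
    (l : List α) (h : {i | s i = a}.Infinite) : {i | (l ++ₛ s) i = a}.Infinite := by
  rw [Set.infinite_iff_exists_gt] at h ⊢
  intro k
  obtain ⟨i, hi, hki⟩ := h k
  exact ⟨l.length + i, (Stream'.get_append_right i l s).trans hi, by omega⟩

lemma Set.infinite_setOf_drop_eq {α : Type} {s : Stream' α} {a : α}
    (n : ℕ) (h : {i | s i = a}.Infinite) : {i | s.drop n i = a}.Infinite := by
  rw [Set.infinite_iff_exists_gt] at h ⊢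
  intro k
  obtain ⟨i, hi, hki⟩ := h (k + n)
  refine ⟨i - n, show s (i - n + n) = a from ?_, by omega⟩
  rwa [Nat.sub_add_cancel (by omega : n ≤ i)]

namespace BA

variable {Q A : Type} {𝒜 : BA Q A}

lemma IsRun.eq_cons {q r : Q} {w : List A} {ρ : List Q} (h : 𝒜.IsRun q w ρ r) :
    ρ = q :: ρ.tail := by
  cases w with
  | nil => rw [h.2]; rfl
  | cons a w => obtain ⟨q', ρ', rfl, -, -⟩ := h; rfl

lemma IsRun.length_eq : ∀ {w : List A} {q r : Q} {ρ : List Q},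
    𝒜.IsRun q w ρ r → ρ.length = w.length + 1
  | [], _, _, _, h => by rw [h.2]; rfl
  | _ :: _, _, _, _, h => by
      obtain ⟨q', ρ', rfl, -, h'⟩ := h
      simp [h'.length_eq]

lemma IsRun.dropLast_append : ∀ {w : List A} {q r : Q} {ρ : List Q},
    𝒜.IsRun q w ρ r → ρ.dropLast ++ [r] = ρ
  | [], _, _, _, h => by rw [h.2, h.1]; rfl
  | _ :: _, _, _, _, h => by
      obtain ⟨q', ρ', rfl, -, h'⟩ := h
      rw [h'.eq_cons, List.dropLast_cons_cons, List.cons_append, ← h'.eq_cons, h'.dropLast_append]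

lemma IsRun.append_infRun {q r : Q} {w : List A} {ρ : List Q} {x : Stream' A}
    {τ : Stream' Q} (hρ : 𝒜.IsRun q w ρ r) (hτ : (𝒜.fromState r).InfRun x τ) :
    (𝒜.fromState q).InfRun (w ++ₛ x) (ρ.dropLast ++ₛ τ) := by
  induction w generalizing q ρ with
  | nil =>
      obtain ⟨rfl, rfl⟩ := hρ
      exact hτ
  | cons a w ih =>
      obtain ⟨q', ρ', rfl, hq', hρ'⟩ := hρ
      obtain ⟨hτ0, hτs⟩ := ih hρ'
      rw [hρ'.eq_cons, List.dropLast_cons_cons, ← hρ'.eq_cons]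
      refine ⟨rfl, fun i => ?_⟩
      cases i with
      | zero =>
          show (ρ'.dropLast ++ₛ τ) 0 ∈ 𝒜.delta q a
          rwa [show (ρ'.dropLast ++ₛ τ) 0 = q' from hτ0]
      | succ i => exact hτs i

lemma IsRun.append_accRun {q r : Q} {w : List A} {ρ : List Q} {x : Stream' A}
    {τ : Stream' Q} (hρ : 𝒜.IsRun q w ρ r) (hτ : (𝒜.fromState r).AccRun x τ) :
    (𝒜.fromState q).AccRun (w ++ₛ x) (ρ.dropLast ++ₛ τ) := by
  obtain ⟨hrun, qf, hqf, hinf⟩ := hτ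
  exact ⟨hρ.append_infRun hrun, qf, hqf, Set.infinite_setOf_append_stream_eq _ hinf⟩

lemma InfRun.isRun_take {q : Q} {x : Stream' A} {τ : Stream' Q}
    (h : (𝒜.fromState q).InfRun x τ) (n : ℕ) :
    𝒜.IsRun q (x.take n) (τ.take (n + 1)) (τ n) := by
  obtain ⟨rfl, hsteps⟩ := h
  induction n generalizing x τ with
  | zero => exact ⟨rfl, rfl⟩
  | succ n ih =>
      exact ⟨τ 1, τ.tail.take (n + 1), rfl, hsteps 0, ih (fun i => hsteps (i + 1))⟩

lemma InfRun.drop {x : Stream' A} {τ : Stream' Q} (h : 𝒜.InfRun x τ) (n : ℕ) :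
    (𝒜.fromState (τ n)).InfRun (x.drop n) (τ.drop n) := by
  refine ⟨show τ (0 + n) = τ n by rw [Nat.zero_add], fun i => ?_⟩
  show τ (i + 1 + n) ∈ 𝒜.delta (τ (i + n)) (x (i + n))
  rw [Nat.add_right_comm]
  exact h.2 (i + n)

lemma AccRun.drop {x : Stream' A} {τ : Stream' Q} (h : 𝒜.AccRun x τ) (n : ℕ) :
    (𝒜.fromState (τ n)).AccRun (x.drop n) (τ.drop n) := by
  obtain ⟨hrun, qf, hqf, hinf⟩ := h
  exact ⟨hrun.drop n, qf, hqf, Set.infinite_setOf_drop_eq n hinf⟩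

lemma AccRun.take_append {x y : Stream' A} {τ σ : Stream' Q} (hτ : 𝒜.AccRun x τ) (n : ℕ)
    (hσ : (𝒜.fromState (τ n)).AccRun y σ) :
    𝒜.AccRun (x.take n ++ₛ y) (τ.take n ++ₛ σ) := by
  obtain ⟨⟨hrun, hsteps⟩, hacc⟩ :=
    (InfRun.isRun_take ⟨Set.mem_singleton _, hτ.1.2⟩ n).append_accRun hσ
  rw [Stream'.dropLast_take, Nat.add_sub_cancel] at hrun hsteps hacc
  refine ⟨⟨?_, hsteps⟩, hacc⟩
  rw [show (τ.take n ++ₛ σ) 0 = τ 0 from hrun]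
  exact hτ.1.1

def usefulStates (𝒜 : BA Q A) : Set Q := {q | ∃ x τ n, 𝒜.AccRun x τ ∧ τ n = q}

theorem Unambiguous.isRun_unique (hU : 𝒜.Unambiguous) {q r : Q} (hq : q ∈ 𝒜.usefulStates)
    (hr : r ∈ 𝒜.usefulStates) {w : List A} {ρ₁ ρ₂ : List Q}
    (h₁ : 𝒜.IsRun q w ρ₁ r) (h₂ : 𝒜.IsRun q w ρ₂ r) : ρ₁ = ρ₂ := by
  obtain ⟨x, τ, n, hτ, rfl⟩ := hq
  obtain ⟨y, σ, m, hσ, rfl⟩ := hr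
  have hacc : ∀ {ρ}, 𝒜.IsRun (τ n) w ρ (σ m) →
      𝒜.AccRun (Stream'.take n x ++ₛ (w ++ₛ Stream'.drop m y))
        (Stream'.take n τ ++ₛ (ρ.dropLast ++ₛ Stream'.drop m σ)) :=
    fun h => hτ.take_append n (h.append_accRun (hσ.drop m))
  have hsuffix := Stream'.append_right_injective _ _ _ (hU _ _ _ (hacc h₁) (hacc h₂))
  have hdropLast := Stream'.append_left_injective _ _ _ _ hsuffix
    (by simp [h₁.length_eq, h₂.length_eq])
  rw [← h₁.dropLast_append, ← h₂.dropLast_append, hdropLast]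

def restrict (𝒜 : BA Q A) (S : Set Q) : BA S A where
  delta q a := Subtype.val ⁻¹' 𝒜.delta q a
  init := Subtype.val ⁻¹' 𝒜.init
  acc := Subtype.val ⁻¹' 𝒜.acc

variable {S : Set Q}

lemma IsRun.of_restrict : ∀ {w : List A} {q r : S} {ρ : List S},
    (𝒜.restrict S).IsRun q w ρ r → 𝒜.IsRun q w (ρ.map Subtype.val) r
  | [], _, _, _, ⟨rfl, rfl⟩ => ⟨rfl, rfl⟩
  | _ :: _, _, _, _, ⟨q', _, rfl, hq', h⟩ => ⟨q', _, rfl, hq', h.of_restrict⟩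

lemma accRun_restrict_iff {x : Stream' A} {ρ : Stream' S} :
    (𝒜.restrict S).AccRun x ρ ↔ 𝒜.AccRun x (fun i => ρ i) := by
  have hvisits (q : S) : {i | ρ i = q} = {i | (ρ i : Q) = q} := by
    simp only [Subtype.ext_iff]
  constructor
  · rintro ⟨hrun, q, hq, hinf⟩
    exact ⟨hrun, q, hq, hvisits q ▸ hinf⟩
  · rintro ⟨hrun, q, hq, hinf⟩
    obtain ⟨i, rfl⟩ := hinf.nonempty
    exact ⟨hrun, ρ i, hq, (hvisits (ρ i)).symm ▸ hinf⟩

lemma Unambiguous.restrict (hU : 𝒜.Unambiguous) (S : Set Q) : (𝒜.restrict S).Unambiguous :=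
  fun x _ _ h₁ h₂ => funext fun i => Subtype.ext <|
    congrFun (hU x _ _ (accRun_restrict_iff.1 h₁) (accRun_restrict_iff.1 h₂)) i

lemma numTrans_restrict_le [Finite Q] (𝒜 : BA Q A) (S : Set Q) :
    (𝒜.restrict S).numTrans ≤ 𝒜.numTrans := by
  let val₂ : S × S → Q × Q := Prod.map Subtype.val Subtype.val
  have hinj : Function.Injective val₂ :=
    Subtype.val_injective.prodMap Subtype.val_injective
  calc (𝒜.restrict S).numTrans
      = (val₂ '' {p | ∃ a, p.2 ∈ (𝒜.restrict S).delta p.1 a}).ncard :=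
        (Set.ncard_image_of_injective _ hinj).symm
    _ ≤ 𝒜.numTrans := Set.ncard_le_ncard (by rintro _ ⟨p, hp, rfl⟩; exact hp)

lemma lang_restrict_usefulStates (𝒜 : BA Q A) :
    (𝒜.restrict 𝒜.usefulStates).Lang = 𝒜.Lang := by
  ext x
  constructor
  · rintro ⟨ρ, hρ⟩
    exact ⟨_, accRun_restrict_iff.1 hρ⟩
  · rintro ⟨ρ, hρ⟩
    exact ⟨fun i => ⟨ρ i, x, ρ, i, hρ, rfl⟩, accRun_restrict_iff.2 hρ⟩

lemma Unambiguous.not_hasDiamond_restrict_usefulStates (hU : 𝒜.Unambiguous) :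
    ¬ (𝒜.restrict 𝒜.usefulStates).HasDiamond := by
  rintro ⟨q, r, _, _, _, hne, h₁, h₂⟩
  exact hne <| List.map_injective_iff.2 Subtype.val_injective <|
    hU.isRun_unique q.2 r.2 h₁.of_restrict h₂.of_restrict

end BA

theorem stmt_0_general {Q Alph : Type} [Finite Q]
    (𝒜 : BA Q Alph) (hU : 𝒜.Unambiguous) :
    ∃ (Q' : Type) (_ : Finite Q') (𝒜' : BA Q' Alph),
      𝒜'.Unambiguous ∧
      Nat.card Q' ≤ Nat.card Q ∧
      𝒜'.numTrans ≤ 𝒜.numTrans ∧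
      𝒜'.Lang = 𝒜.Lang ∧
      ¬ 𝒜'.HasDiamond :=
  ⟨𝒜.usefulStates, inferInstance, 𝒜.restrict 𝒜.usefulStates, hU.restrict _,
    Finite.card_subtype_le _, 𝒜.numTrans_restrict_le _, 𝒜.lang_restrict_usefulStates,
    hU.not_hasDiamond_restrict_usefulStates⟩

/-- every UBA has an equivalent diamond-free UBA with at most as many
states and transitions. -/
theorem stmt_0 {Q Alph : Type} [Finite Q] [Finite Alph]
    (𝒜 : BA Q Alph) (hU : 𝒜.Unambiguous) :
    ∃ (Q' : Type) (_ : Finite Q') (𝒜' : BA Q' Alph),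
      𝒜'.Unambiguous ∧
      Nat.card Q' ≤ Nat.card Q ∧
      𝒜'.numTrans ≤ 𝒜.numTrans ∧
      𝒜'.Lang = 𝒜.Lang ∧
      ¬ 𝒜'.HasDiamond :=
  stmt_0_general 𝒜 hU
end

section
/- Let D be a recurrent SCC of B, let d ∈ D, and suppose w ∈ S* is such that d⇒w is defined, d ∈ d⇒w, and d⇒w is not a cut. Then there exist v ∈ S* and e ∈ D with e ≠ d such that d⇒v is defined, {d, e} ⊆ d⇒v, and e⇒w is defined and nonempty. Moreover, for any such e one has d⇒w ∩ e⇒w = ∅, and hence d⇒(vw) ⊇ {d,e}⇒w ⊋ d⇒w. -/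
open Matrix MeasureTheory

attribute [local instance] Classical.propDecidable

/-!
Suppose no state `e ≠ d` sharing a fibre `d ⇒ v` with `d` survives `w`. Since `d ⇒ w` is not a
cut, some word `u` empties it. From any nonempty fibre `d ⇒ x` one can then return to `d`, read
`w` (which collapses the fibre onto `d ⇒ w`) and read `u`; these killing words have bounded length
and probability bounded below, so the probability that `d ⇒ x` stays nonempty along the chain
decays geometrically. Without diamonds, row `d` of `B_{D,D} ^ n` is bounded by that probability;
by strong connectivity every entry of `B_{D,D} ^ n` then tends to `0`, so `ρ(B_{D,D}) < 1`,
contradicting recurrence. The remaining claims hold because two distinct states of one fibre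
whose `w`-successors met would produce a diamond.
-/

open Filter Topology

section Fibres

variable {Q S : Type} {𝒜 : BA Q S} {D : Set (Q × S)}

theorem fibRun_mono {f g : Set (Q × S)} (h : f ⊆ g) (l : List S) :
    fibRun 𝒜 D f l ⊆ fibRun 𝒜 D g l := by
  induction l generalizing f g with
  | nil => exact h
  | cons t l ih => exact ih (fun _ ⟨hpD, hpt, e, he, hδ⟩ => ⟨hpD, hpt, e, h he, hδ⟩)

@[simp]
theorem fibStep_empty (t : S) : fibStep 𝒜 D ∅ t = ∅ := by
  simp [fibStep]

theorem fibRun_append (f : Set (Q × S)) (l₁ l₂ : List S) :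
    fibRun 𝒜 D f (l₁ ++ l₂) = fibRun 𝒜 D (fibRun 𝒜 D f l₁) l₂ := by
  induction l₁ generalizing f with
  | nil => rfl
  | cons t l ih => exact ih _

theorem fibRun_singleton_append (f : Set (Q × S)) (l : List S) (t : S) :
    fibRun 𝒜 D f (l ++ [t]) = fibStep 𝒜 D (fibRun 𝒜 D f l) t :=
  fibRun_append f l [t]

theorem mem_fibRun_iff {f : Set (Q × S)} {l : List S} {p : Q × S} :
    p ∈ fibRun 𝒜 D f l ↔ ∃ e ∈ f, p ∈ fibRun 𝒜 D {e} l := by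
  induction l generalizing f with
  | nil => simp [fibRun]
  | cons t l ih =>
    change p ∈ fibRun 𝒜 D (fibStep 𝒜 D f t) l ↔ ∃ e ∈ f, p ∈ fibRun 𝒜 D (fibStep 𝒜 D {e} t) l
    constructor
    · rw [ih]
      rintro ⟨g, ⟨hgD, hgt, e, he, hδ⟩, hp⟩
      exact ⟨e, he, ih.2 ⟨g, ⟨hgD, hgt, e, rfl, hδ⟩, hp⟩⟩
    · rintro ⟨e, he, hp⟩
      obtain ⟨g, ⟨hgD, hgt, _, rfl, hδ⟩, hg⟩ := ih.1 hp
      exact ih.2 ⟨g, ⟨hgD, hgt, _, he, hδ⟩, hg⟩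

theorem fibRun_subset {f : Set (Q × S)} (hf : f ⊆ D) (l : List S) : fibRun 𝒜 D f l ⊆ D := by
  induction l generalizing f with
  | nil => exact hf
  | cons t l ih => exact ih fun _ hp => hp.1

theorem snd_eq_of_mem_fibRun {f : Set (Q × S)} {s : S} (hf : ∀ q ∈ f, q.2 = s) {l : List S}
    {p : Q × S} (hp : p ∈ fibRun 𝒜 D f l) : p.2 = l.getLastD s := by
  induction l generalizing f s with
  | nil => exact hf p hp
  | cons t l ih => rw [List.getLastD_cons]; exact ih (fun _ hq => hq.2.1) hp

theorem snd_eq_of_mem_fibRun_singleton {g p : Q × S} {l : List S}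
    (hp : p ∈ fibRun 𝒜 D {g} l) : p.2 = l.getLastD g.2 :=
  snd_eq_of_mem_fibRun (by rintro _ rfl; rfl) hp

end Fibres

section Runs

variable {Q A : Type} {𝒜 : BA Q A}

theorem BA.IsRun.length_eq_s4 {q r : Q} {w : List A} {ρ : List Q} (h : 𝒜.IsRun q w ρ r) :
    ρ.length = w.length + 1 := by
  induction w generalizing q ρ with
  | nil => obtain ⟨rfl, rfl⟩ := h; rfl
  | cons a w ih =>
    obtain ⟨_, _, rfl, -, h⟩ := h
    simp [ih h]

theorem BA.IsRun.exists_eq_cons {q r : Q} {w : List A} {ρ : List Q} (h : 𝒜.IsRun q w ρ r) :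
    ∃ ρ₀, ρ = q :: ρ₀ := by
  cases w with
  | nil => exact ⟨[], h.2⟩
  | cons a w => obtain ⟨_, ρ', rfl, -⟩ := h; exact ⟨ρ', rfl⟩

theorem BA.IsRun.append {q r r' : Q} {w₁ w₂ : List A} {ρ₁ ρ₂ : List Q}
    (h₁ : 𝒜.IsRun q w₁ ρ₁ r) (h₂ : 𝒜.IsRun r w₂ ρ₂ r') :
    𝒜.IsRun q (w₁ ++ w₂) (ρ₁.dropLast ++ ρ₂) r' := by
  induction w₁ generalizing q ρ₁ with
  | nil => obtain ⟨rfl, rfl⟩ := h₁; exact h₂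
  | cons a w ih =>
    obtain ⟨q', ρ', rfl, hq', h⟩ := h₁
    obtain ⟨ρ₀, rfl⟩ := h.exists_eq_cons
    exact ⟨q', _, rfl, hq', ih h⟩

variable {D : Set (Q × A)}

theorem exists_isRun_of_mem_fibRun {l : List A} {g p : Q × A} (hp : p ∈ fibRun 𝒜 D {g} l) :
    ∃ ρ, 𝒜.IsRun g.1 (g.2 :: l).dropLast (g.1 :: ρ) p.1 := by
  induction l generalizing g with
  | nil => obtain rfl := hp; exact ⟨[], rfl, rfl⟩
  | cons t l ih =>
    change p ∈ fibRun 𝒜 D (fibStep 𝒜 D {g} t) l at hp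
    obtain ⟨g', ⟨-, rfl, _, rfl, hδ⟩, hg'⟩ := mem_fibRun_iff.1 hp
    obtain ⟨ρ, hρ⟩ := ih hg'
    exact ⟨g'.1 :: ρ, g'.1, g'.1 :: ρ, rfl, hδ, hρ⟩

/-- Runs from `g` to a common successor through `p₁` and through `p₂` would form a diamond. -/
theorem disjoint_fibRun_of_mem (hND : ¬ 𝒜.HasDiamond) {g p₁ p₂ : Q × A} {x : List A}
    (h₁ : p₁ ∈ fibRun 𝒜 D {g} x) (h₂ : p₂ ∈ fibRun 𝒜 D {g} x) (hne : p₁ ≠ p₂) (y : List A) :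
    Disjoint (fibRun 𝒜 D {p₁} y) (fibRun 𝒜 D {p₂} y) := by
  have hsnd : p₁.2 = p₂.2 :=
    (snd_eq_of_mem_fibRun_singleton h₁).trans (snd_eq_of_mem_fibRun_singleton h₂).symm
  refine Set.disjoint_left.2 fun p hp₁ hp₂ => hND ?_
  obtain ⟨ρ₁, hρ₁⟩ := exists_isRun_of_mem_fibRun h₁
  obtain ⟨ρ₂, hρ₂⟩ := exists_isRun_of_mem_fibRun h₂
  obtain ⟨σ₁, hσ₁⟩ := exists_isRun_of_mem_fibRun hp₁
  obtain ⟨σ₂, hσ₂⟩ := exists_isRun_of_mem_fibRun hp₂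
  rw [← hsnd] at hσ₂
  refine ⟨g.1, p.1, _, _, _, fun heq => hne ?_, hρ₁.append hσ₁, hρ₂.append hσ₂⟩
  have hlen : (g.1 :: ρ₁).dropLast.length = (g.1 :: ρ₂).dropLast.length := by
    simp only [List.length_dropLast, hρ₁.length_eq_s4, hρ₂.length_eq_s4]
  obtain ⟨hfst, -⟩ := List.cons_eq_cons.1 (List.append_inj_right heq hlen)
  exact Prod.ext hfst hsnd

end Runs

section Words

variable {S : Type} {M : Matrix S S ℝ}

theorem Enabled.append {s : S} {l₁ l₂ : List S} (h₁ : Enabled M (s :: l₁))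
    (h₂ : Enabled M (l₁.getLastD s :: l₂)) : Enabled M (s :: (l₁ ++ l₂)) := by
  induction l₁ generalizing s with
  | nil => exact h₂
  | cons t l ih =>
    rw [List.getLastD_cons] at h₂
    obtain ⟨hst, h₁⟩ := List.isChain_cons_cons.1 h₁
    exact List.isChain_cons_cons.2 ⟨hst, ih h₁ h₂⟩

theorem IsMarkov.apply_le_one [Fintype S] (hM : IsMarkov M) (s t : S) : M s t ≤ 1 :=
  (Finset.single_le_sum (fun u _ => hM.1 s u) (Finset.mem_univ t)).trans_eq (hM.2 s)

noncomputable def wordProb (M : Matrix S S ℝ) : S → List S → ℝ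
  | _, [] => 1
  | s, t :: l => M s t * wordProb M t l

theorem wordProb_pos {s : S} {l : List S} (h : Enabled M (s :: l)) : 0 < wordProb M s l := by
  induction l generalizing s with
  | nil => exact one_pos
  | cons t l ih =>
    obtain ⟨hst, h⟩ := List.isChain_cons_cons.1 h
    exact mul_pos hst (ih h)

theorem wordProb_nonneg [Fintype S] (hM : IsMarkov M) (s : S) (l : List S) :
    0 ≤ wordProb M s l := by
  induction l generalizing s with
  | nil => exact zero_le_one
  | cons t l ih => exact mul_nonneg (hM.1 s t) (ih t)

theorem wordProb_le_one [Fintype S] (hM : IsMarkov M) (s : S) (l : List S) :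
    wordProb M s l ≤ 1 := by
  induction l generalizing s with
  | nil => exact le_rfl
  | cons t l ih => exact mul_le_one₀ (hM.apply_le_one s t) (wordProb_nonneg hM t l) (ih t)

end Words

section SCC

theorem IsSCC.mem_of_rel {V : Type} {N : Matrix V V ℝ} {D : Set V} (hD : IsSCC N D)
    {a b c : V} (ha : a ∈ D) (hb : b ∈ D) (hac : 0 < N a c)
    (hcb : Relation.ReflTransGen (fun x y => 0 < N x y) c b) : c ∈ D := by
  obtain ⟨v, rfl⟩ := hD
  exact ⟨ha.1.tail hac, hcb.trans hb.2⟩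

theorem IsSCC.reflTransGen {V : Type} {N : Matrix V V ℝ} {D : Set V} (hD : IsSCC N D)
    {a b : V} (ha : a ∈ D) (hb : b ∈ D) : Relation.ReflTransGen (fun x y => 0 < N x y) a b := by
  obtain ⟨v, rfl⟩ := hD
  exact ha.2.trans hb.1

theorem IsSCC.exists_pow_pos {V : Type} [Fintype V] [DecidableEq V] {N : Matrix V V ℝ} {D : Set V}
    (hN : ∀ a b, 0 ≤ N a b) (hD : IsSCC N D) (a b : D) : ∃ k, 0 < (subMat N D ^ k) a b := by
  obtain ⟨a, ha⟩ := a
  obtain ⟨b, hb⟩ := b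
  refine Relation.ReflTransGen.head_induction_on
    (motive := fun x _ => ∀ hx : x ∈ D, ∃ k, 0 < (subMat N D ^ k) ⟨x, hx⟩ ⟨b, hb⟩)
    (hD.reflTransGen ha hb) (fun _ => ⟨0, by simp⟩) ?_ ha
  intro x c hxc hcb ih hx
  have hc := hD.mem_of_rel hx hb hxc hcb
  obtain ⟨k, hk⟩ := ih hc
  refine ⟨k + 1, ?_⟩
  rw [pow_succ', Matrix.mul_apply]
  exact Finset.sum_pos' (fun y _ => mul_nonneg (hN _ _) (Matrix.pow_apply_nonneg
    (fun _ _ => hN _ _) k y _)) ⟨⟨c, hc⟩, Finset.mem_univ _, mul_pos hxc hk⟩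

variable {Q S : Type} {𝒜 : BA Q S} {M : Matrix S S ℝ} {D : Set (Q × S)}

theorem Bmat_pos_iff {p p' : Q × S} :
    0 < Bmat 𝒜 M p p' ↔ p'.1 ∈ 𝒜.delta p.1 p.2 ∧ 0 < M p.2 p'.2 := by
  by_cases h : p'.1 ∈ 𝒜.delta p.1 p.2 <;> simp [Bmat, h]

theorem IsSCC.exists_word_mem_fibRun (hD : IsSCC (Bmat 𝒜 M) D) {e f : Q × S} (he : e ∈ D)
    (hf : f ∈ D) : ∃ x, Enabled M (e.2 :: x) ∧ f ∈ fibRun 𝒜 D {e} x := by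
  refine Relation.ReflTransGen.head_induction_on
    (motive := fun x _ => x ∈ D → ∃ l, Enabled M (x.2 :: l) ∧ f ∈ fibRun 𝒜 D {x} l)
    (hD.reflTransGen he hf) (fun _ => ⟨[], List.isChain_singleton _, rfl⟩) ?_ he
  intro x c hxc hcf ih hx
  have hc := hD.mem_of_rel hx hf hxc hcf
  obtain ⟨hδ, hM⟩ := Bmat_pos_iff.1 hxc
  obtain ⟨l, hl, hfl⟩ := ih hc
  refine ⟨c.2 :: l, List.isChain_cons_cons.2 ⟨hM, hl⟩, fibRun_mono ?_ l hfl⟩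
  exact Set.singleton_subset_iff.2 ⟨hc, rfl, x, rfl, hδ⟩

end SCC

section Survival

/-- `survival 𝒜 M D n s R` is the probability that `R ⇒ u ≠ ∅` for the random word `u` formed by
the next `n` states of the chain started at `s`. -/
noncomputable def survival {Q S : Type} [Fintype S] (𝒜 : BA Q S) (M : Matrix S S ℝ)
    (D : Set (Q × S)) : ℕ → S → Set (Q × S) → ℝ
  | 0, _, R => if R = ∅ then 0 else 1
  | n + 1, s, R => ∑ t, M s t * survival 𝒜 M D n t (fibStep 𝒜 D R t)

variable {Q S : Type} [Fintype S] {𝒜 : BA Q S} {M : Matrix S S ℝ} {D : Set (Q × S)}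

@[simp]
theorem survival_empty (n : ℕ) (s : S) : survival 𝒜 M D n s ∅ = 0 := by
  induction n generalizing s with
  | zero => simp [survival]
  | succ n ih => simp [survival, ih]

theorem survival_nonneg (hM : IsMarkov M) (n : ℕ) (s : S) (R : Set (Q × S)) :
    0 ≤ survival 𝒜 M D n s R := by
  induction n generalizing s R with
  | zero => unfold survival; split_ifs <;> norm_num
  | succ n ih => exact Finset.sum_nonneg fun t _ => mul_nonneg (hM.1 s t) (ih t _)

theorem survival_le_one (hM : IsMarkov M) (n : ℕ) (s : S) (R : Set (Q × S)) :
    survival 𝒜 M D n s R ≤ 1 := by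
  induction n generalizing s R with
  | zero => unfold survival; split_ifs <;> norm_num
  | succ n ih =>
    calc ∑ t, M s t * survival 𝒜 M D n t (fibStep 𝒜 D R t) ≤ ∑ t, M s t :=
          Finset.sum_le_sum fun t _ => mul_le_of_le_one_right (hM.1 s t) (ih t _)
      _ = 1 := hM.2 s

theorem survival_succ_le (hM : IsMarkov M) (n : ℕ) (s : S) (R : Set (Q × S)) :
    survival 𝒜 M D (n + 1) s R ≤ survival 𝒜 M D n s R := by
  induction n generalizing s R with
  | zero =>
    rcases eq_or_ne R ∅ with rfl | hR
    · simp
    · rw [show survival 𝒜 M D 0 s R = 1 from if_neg hR]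
      exact survival_le_one hM 1 s R
  | succ n ih =>
    exact Finset.sum_le_sum fun t _ => mul_le_mul_of_nonneg_left (ih t _) (hM.1 s t)

theorem survival_antitone (hM : IsMarkov M) (s : S) (R : Set (Q × S)) :
    Antitone fun n => survival 𝒜 M D n s R :=
  antitone_nat_of_succ_le fun n => survival_succ_le hM n s R

theorem survival_length_add_le (hM : IsMarkov M) (P : S → Set (Q × S) → Prop)
    (hP : ∀ s R t, P s R → 0 < M s t → P t (fibStep 𝒜 D R t)) {m : ℕ} {X : ℝ}
    (hX : ∀ s R, P s R → survival 𝒜 M D m s R ≤ X) (κ : List S) {s : S} {R : Set (Q × S)}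
    (hR : P s R) (hκ : Enabled M (s :: κ)) (hkill : fibRun 𝒜 D R κ = ∅) :
    survival 𝒜 M D (κ.length + m) s R ≤ (1 - wordProb M s κ) * X := by
  induction κ generalizing s R with
  | nil =>
    obtain rfl : R = ∅ := hkill
    simp [wordProb]
  | cons t κ ih =>
    obtain ⟨hst, hκ⟩ := List.isChain_cons_cons.1 hκ
    rw [List.length_cons, Nat.add_right_comm]
    have hterm : ∀ t', M s t' * survival 𝒜 M D (κ.length + m) t' (fibStep 𝒜 D R t') ≤
        M s t' * X - if t' = t then M s t * wordProb M t κ * X else 0 := by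
      intro t'
      split_ifs with ht
      · subst ht
        exact (mul_le_mul_of_nonneg_left (ih (hP s R _ hR hst) hκ hkill) hst.le).trans_eq (by ring)
      · rcases (hM.1 s t').eq_or_lt with hzero | hpos
        · simp [← hzero]
        · rw [sub_zero]
          refine mul_le_mul_of_nonneg_left ?_ hpos.le
          exact (survival_antitone hM _ _ (Nat.le_add_left m _)).trans (hX _ _ (hP s R t' hR hpos))
    calc survival 𝒜 M D (κ.length + m + 1) s R
        ≤ ∑ t', (M s t' * X - if t' = t then M s t * wordProb M t κ * X else 0) :=
          Finset.sum_le_sum fun t' _ => hterm t'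
      _ = (1 - wordProb M s (t :: κ)) * X := by
          rw [Finset.sum_sub_distrib, ← Finset.sum_mul, hM.2 s, Finset.sum_ite_eq']
          simp only [Finset.mem_univ, if_true, wordProb]
          ring

theorem tendsto_survival_atTop_zero (hM : IsMarkov M) (P : S → Set (Q × S) → Prop)
    (hP : ∀ s R t, P s R → 0 < M s t → P t (fibStep 𝒜 D R t)) {N : ℕ} (hN : 0 < N) {ε : ℝ}
    (hε : 0 < ε) (hε₁ : ε ≤ 1)
    (hkill : ∀ s R, P s R → R.Nonempty → ∃ κ : List S, κ.length ≤ N ∧ ε ≤ wordProb M s κ ∧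
      Enabled M (s :: κ) ∧ fibRun 𝒜 D R κ = ∅)
    {s : S} {R : Set (Q × S)} (hR : P s R) :
    Tendsto (fun n => survival 𝒜 M D n s R) atTop (𝓝 0) := by
  have hdecay : ∀ k s R, P s R → survival 𝒜 M D (k * N) s R ≤ (1 - ε) ^ k := by
    intro k
    induction k with
    | zero => exact fun s R _ => by simpa using survival_le_one hM 0 s R
    | succ k ih =>
      intro s R hR
      obtain rfl | hne := R.eq_empty_or_nonempty
      · simpa using pow_nonneg (sub_nonneg.2 hε₁) _
      obtain ⟨κ, hlen, hprob, hen, hκ⟩ := hkill s R hR hne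
      calc survival 𝒜 M D ((k + 1) * N) s R
          ≤ survival 𝒜 M D (κ.length + k * N) s R :=
            survival_antitone hM s R (by rw [Nat.succ_mul]; omega)
        _ ≤ (1 - wordProb M s κ) * (1 - ε) ^ k :=
            survival_length_add_le hM P hP ih κ hR hen hκ
        _ ≤ (1 - ε) ^ (k + 1) := by
            rw [pow_succ']
            exact mul_le_mul_of_nonneg_right (by linarith) (pow_nonneg (by linarith) _)
  refine tendsto_of_tendsto_of_tendsto_of_le_of_le tendsto_const_nhds
    ((tendsto_pow_atTop_nhds_zero_of_lt_one (sub_nonneg.2 hε₁) (sub_lt_self 1 hε)).comp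
      (Nat.tendsto_div_const_atTop hN.ne')) (fun n => survival_nonneg hM n s R) fun n => ?_
  exact (survival_antitone hM s R (Nat.div_mul_le_self n N)).trans (hdecay _ s R hR)

end Survival

section Spectral

variable {ι : Type} [Fintype ι]

theorem Matrix.apply_mul_apply_le_mul_apply {X Y : Matrix ι ι ℝ} (hX : ∀ i j, 0 ≤ X i j)
    (hY : ∀ i j, 0 ≤ Y i j) (i k j : ι) : X i k * Y k j ≤ (X * Y) i j :=
  Finset.single_le_sum (f := fun l => X i l * Y l j) (fun l _ => mul_nonneg (hX i l) (hY l j))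
    (Finset.mem_univ k)

variable [DecidableEq ι]

/-- Uses `(P ^ a) i₀ i * (P ^ n) i j * (P ^ b) j i₀ ≤ (P ^ (a + n + b)) i₀ i₀`. -/
theorem tendsto_pow_atTop_zero_of_apply_self {P : Matrix ι ι ℝ} (hP : ∀ i j, 0 ≤ P i j)
    (hconn : ∀ i j, ∃ k, 0 < (P ^ k) i j) (i₀ : ι)
    (h : Tendsto (fun n => (P ^ n) i₀ i₀) atTop (𝓝 0)) :
    Tendsto (fun n => P ^ n) atTop (𝓝 0) := by
  have hpow := Matrix.pow_apply_nonneg hP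
  refine tendsto_pi_nhds.2 fun i => tendsto_pi_nhds.2 fun j => ?_
  obtain ⟨a, ha⟩ := hconn i₀ i
  obtain ⟨b, hb⟩ := hconn j i₀
  have hle : ∀ n, (P ^ n) i j ≤ (P ^ (n + (a + b))) i₀ i₀ / ((P ^ a) i₀ i * (P ^ b) j i₀) := by
    intro n
    rw [le_div_iff₀ (mul_pos ha hb)]
    calc (P ^ n) i j * ((P ^ a) i₀ i * (P ^ b) j i₀)
        = (P ^ a) i₀ i * (P ^ n) i j * (P ^ b) j i₀ := by ring
      _ ≤ (P ^ a * P ^ n) i₀ j * (P ^ b) j i₀ := mul_le_mul_of_nonneg_right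
          (Matrix.apply_mul_apply_le_mul_apply (hpow a) (hpow n) i₀ i j) (hpow b j i₀)
      _ ≤ (P ^ a * P ^ n * P ^ b) i₀ i₀ :=
          Matrix.apply_mul_apply_le_mul_apply (by rw [← pow_add]; exact hpow _) (hpow b) i₀ j i₀
      _ = (P ^ (n + (a + b))) i₀ i₀ := by rw [← pow_add, ← pow_add, add_comm a n, add_assoc]
  refine tendsto_of_tendsto_of_tendsto_of_le_of_le tendsto_const_nhds ?_ (fun n => hpow n i j) hle
  simpa using (h.comp (tendsto_add_atTop_nat (a + b))).div_const ((P ^ a) i₀ i * (P ^ b) j i₀)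

theorem specRad_lt_one_of_tendsto_pow {P : Matrix ι ι ℝ}
    (h : Tendsto (fun n => P ^ n) atTop (𝓝 0)) : specRad P < 1 := by
  set A := P.map Complex.ofReal
  have hlt : ∀ c ∈ spectrum ℂ A, ‖c‖ < 1 := by
    intro c hc
    rw [← Matrix.spectrum_toLin', ← Module.End.hasEigenvalue_iff_mem_spectrum] at hc
    obtain ⟨v, hv⟩ := hc.exists_hasEigenvector
    obtain ⟨i, hi⟩ := Function.ne_iff.1 hv.2
    have hpow : ∀ n, ((P ^ n).map Complex.ofReal *ᵥ v) i = c ^ n * v i := by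
      intro n
      have := hv.pow_apply n
      rw [← Matrix.toLin'_pow, Matrix.toLin'_apply] at this
      rw [show (P ^ n).map Complex.ofReal = A ^ n from Matrix.map_pow P Complex.ofRealHom n, this]
      rfl
    have hcont : Continuous fun N : Matrix ι ι ℝ => (N.map Complex.ofReal *ᵥ v) i :=
      (continuous_apply i).comp
        ((continuous_id.matrix_map Complex.continuous_ofReal).matrix_mulVec continuous_const)
    have hlim := ((hcont.tendsto 0).comp h).norm.div_const ‖v i‖
    simp only [Function.comp_def, hpow, norm_mul, norm_pow,
      mul_div_cancel_right₀ _ (norm_ne_zero_iff.2 hi)] at hlim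
    simpa using hlim
  obtain hempty | hne := ({x : ℝ | ∃ c ∈ spectrum ℂ A, x = ‖c‖}).eq_empty_or_nonempty
  · simp [specRad, A, hempty]
  · have hfin : ({x : ℝ | ∃ c ∈ spectrum ℂ A, x = ‖c‖}).Finite := by
      convert (Matrix.finite_spectrum A).image (‖·‖) using 1
      ext; simp [eq_comm]
    exact (hfin.csSup_lt_iff hne).2 (by rintro _ ⟨c, hc, rfl⟩; exact hlt c hc)

end Spectral

section Link

variable {Q S : Type} [Fintype S] {𝒜 : BA Q S} {M : Matrix S S ℝ} {D : Set (Q × S)}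

theorem Bmat_nonneg (hM : IsMarkov M) (p p' : Q × S) : 0 ≤ Bmat 𝒜 M p p' := by
  simp only [Bmat, Matrix.of_apply]
  split_ifs
  exacts [hM.1 _ _, le_rfl]

variable [Fintype Q]

/-- Without diamonds, a state of `D` has at most one `B`-predecessor in a fibre `d ⇒ x`. -/
theorem vecMul_indicator_subMat_Bmat (hND : ¬ 𝒜.HasDiamond) {d : Q × S} (hd : d ∈ D)
    (x : List S) :
    vecMul (fun p : D => (fibRun 𝒜 D {d} x).indicator 1 (p : Q × S)) (subMat (Bmat 𝒜 M) D) =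
      ∑ t, M (x.getLastD d.2) t •
        fun p : D => (fibRun 𝒜 D {d} (x ++ [t])).indicator 1 (p : Q × S) := by
  funext g
  set R := fibRun 𝒜 D {d} x
  have hR : ∀ p ∈ R, p.2 = x.getLastD d.2 := fun p hp => snd_eq_of_mem_fibRun_singleton hp
  have hrhs : (∑ t, M (x.getLastD d.2) t •
      fun p : D => (fibRun 𝒜 D {d} (x ++ [t])).indicator (1 : Q × S → ℝ) p) g =
      M (x.getLastD d.2) g.1.2 * (fibStep 𝒜 D R g.1.2).indicator 1 g.1 := by
    simp only [Finset.sum_apply, Pi.smul_apply, smul_eq_mul, fibRun_singleton_append]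
    refine Finset.sum_eq_single _ (fun t _ ht => ?_) (by simp)
    rw [Set.indicator_of_notMem (fun hg => ht hg.2.1.symm), mul_zero]
  rw [hrhs, vecMul, dotProduct]
  by_cases hg : g.1 ∈ fibStep 𝒜 D R g.1.2
  · obtain ⟨-, -, p₀, hp₀, hδ₀⟩ := id hg
    rw [Set.indicator_of_mem hg, Finset.sum_eq_single ⟨p₀, fibRun_subset (by simpa) x hp₀⟩]
    · simp only [Set.indicator_of_mem hp₀, subMat, Bmat, Matrix.submatrix_apply, Matrix.of_apply,
        if_pos hδ₀, Pi.one_apply, one_mul, mul_one]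
      rw [hR p₀ hp₀]
    · intro p _ hne
      by_cases hp : p.1 ∈ R
      · have hδ : g.1.1 ∉ 𝒜.delta p.1.1 p.1.2 := fun hδ =>
          Set.disjoint_left.1
            (disjoint_fibRun_of_mem hND hp hp₀ (fun h => hne (Subtype.ext h)) [g.1.2])
            (⟨g.2, rfl, _, rfl, hδ⟩ : g.1 ∈ fibStep 𝒜 D {p.1} g.1.2) ⟨g.2, rfl, _, rfl, hδ₀⟩
        simp [subMat, Bmat, hδ]
      · simp [Set.indicator_of_notMem hp]
    · simp
  · rw [Set.indicator_of_notMem hg, mul_zero]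
    refine Finset.sum_eq_zero fun p _ => ?_
    by_cases hp : p.1 ∈ R
    · have hδ : g.1.1 ∉ 𝒜.delta p.1.1 p.1.2 := fun hδ => hg ⟨g.2, rfl, _, hp, hδ⟩
      simp [subMat, Bmat, hδ]
    · simp [Set.indicator_of_notMem hp]

theorem vecMul_indicator_pow_le_survival (hM : IsMarkov M) (hND : ¬ 𝒜.HasDiamond) {d : Q × S}
    (hd : d ∈ D) (n : ℕ) (x : List S) (f : D) :
    vecMul (fun p : D => (fibRun 𝒜 D {d} x).indicator 1 (p : Q × S)) (subMat (Bmat 𝒜 M) D ^ n) f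
      ≤ survival 𝒜 M D n (x.getLastD d.2) (fibRun 𝒜 D {d} x) := by
  induction n generalizing x with
  | zero =>
    rw [pow_zero, vecMul_one]
    unfold survival
    split_ifs with h
    · simp [h]
    · exact Set.indicator_le_self' (fun _ _ => zero_le_one) _
  | succ n ih =>
    rw [pow_succ', ← vecMul_vecMul, vecMul_indicator_subMat_Bmat hND hd, sum_vecMul]
    simp only [smul_vecMul, Finset.sum_apply, Pi.smul_apply, smul_eq_mul]
    refine Finset.sum_le_sum fun t _ => mul_le_mul_of_nonneg_left ?_ (hM.1 _ t)
    simpa [List.getLastD_concat, fibRun_singleton_append] using ih (x ++ [t])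

theorem specRad_lt_one_of_tendsto_survival (hM : IsMarkov M) (hND : ¬ 𝒜.HasDiamond)
    (hD : IsSCC (Bmat 𝒜 M) D) {d : Q × S} (hd : d ∈ D)
    (h : Tendsto (fun n => survival 𝒜 M D n d.2 {d}) atTop (𝓝 0)) :
    specRad (subMat (Bmat 𝒜 M) D) < 1 := by
  have hnonneg : ∀ p g : D, 0 ≤ subMat (Bmat 𝒜 M) D p g := fun _ _ => Bmat_nonneg hM _ _
  have hind : (fun p : D => ({d} : Set (Q × S)).indicator 1 (p : Q × S)) =
      Pi.single ⟨d, hd⟩ (1 : ℝ) := by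
    funext p
    rcases eq_or_ne p ⟨d, hd⟩ with rfl | hp
    · simp
    · simp [hp, Set.indicator_of_notMem (show p.1 ∉ {d} from fun h => hp (Subtype.ext h))]
  refine specRad_lt_one_of_tendsto_pow <| tendsto_pow_atTop_zero_of_apply_self hnonneg
    (hD.exists_pow_pos (Bmat_nonneg hM)) ⟨d, hd⟩ <|
    tendsto_of_tendsto_of_tendsto_of_le_of_le tendsto_const_nhds h
      (fun n => Matrix.pow_apply_nonneg hnonneg n _ _) fun n => ?_
  have := vecMul_indicator_pow_le_survival hM hND hd n [] ⟨d, hd⟩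
  rwa [show fibRun 𝒜 D {d} [] = {d} from rfl, hind, single_one_vecMul] at this

end Link

section Enlargement

variable {Q S : Type} {𝒜 : BA Q S} {M : Matrix S S ℝ} {D : Set (Q × S)} {d : Q × S}
  {w u : List S}

/-- The word returns from `e` to `d`, then reads `w`, which by `hA` forgets every state but `d`,
and finally `u`. -/
theorem exists_word_fibRun_eq_empty (hD : IsSCC (Bmat 𝒜 M) D) (hd : d ∈ D)
    (hw : Enabled M (d.2 :: w)) (hu : Enabled M (w.getLastD d.2 :: u))
    (hwu : fibRun 𝒜 D (fibRun 𝒜 D {d} w) u = ∅)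
    (hA : ∀ v e, e ≠ d → Enabled M (d.2 :: v) → d ∈ fibRun 𝒜 D {d} v →
      e ∈ fibRun 𝒜 D {d} v → fibRun 𝒜 D {e} w = ∅)
    {e : Q × S} (he : e ∈ D) :
    ∃ κ, Enabled M (e.2 :: κ) ∧ ∀ x, Enabled M (d.2 :: x) → e ∈ fibRun 𝒜 D {d} x →
      fibRun 𝒜 D (fibRun 𝒜 D {d} x) κ = ∅ := by
  obtain ⟨y, hy, hdy⟩ := hD.exists_word_mem_fibRun he hd
  have hyd : y.getLastD e.2 = d.2 := (snd_eq_of_mem_fibRun_singleton hdy).symm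
  refine ⟨y ++ (w ++ u), hy.append (hyd ▸ hw.append hu), fun x hx hex => ?_⟩
  have hdxy : d ∈ fibRun 𝒜 D {d} (x ++ y) := by
    rw [fibRun_append]
    exact fibRun_mono (Set.singleton_subset_iff.2 hex) y hdy
  have hxy : Enabled M (d.2 :: (x ++ y)) :=
    hx.append (snd_eq_of_mem_fibRun_singleton hex ▸ hy)
  have hback : fibRun 𝒜 D (fibRun 𝒜 D {d} (x ++ y)) w = fibRun 𝒜 D {d} w := by
    ext p
    rw [mem_fibRun_iff]
    constructor
    · rintro ⟨e', he', hp⟩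
      obtain rfl | hne := eq_or_ne e' d
      · exact hp
      · simp [hA _ e' hne hxy hdxy he'] at hp
    · exact fun hp => ⟨d, hdxy, hp⟩
  rw [fibRun_append, fibRun_append, ← fibRun_append {d} x y, hback, hwu]

theorem tendsto_survival_of_forall_fibRun_eq_empty [Fintype Q] [Fintype S] (hM : IsMarkov M)
    (hD : IsSCC (Bmat 𝒜 M) D) (hd : d ∈ D)
    (hw : Enabled M (d.2 :: w)) (hu : Enabled M (w.getLastD d.2 :: u))
    (hwu : fibRun 𝒜 D (fibRun 𝒜 D {d} w) u = ∅)
    (hA : ∀ v e, e ≠ d → Enabled M (d.2 :: v) → d ∈ fibRun 𝒜 D {d} v →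
      e ∈ fibRun 𝒜 D {d} v → fibRun 𝒜 D {e} w = ∅) :
    Tendsto (fun n => survival 𝒜 M D n d.2 {d}) atTop (𝓝 0) := by
  have : Nonempty D := ⟨⟨d, hd⟩⟩
  choose κ hκ hkill using fun e : D => exists_word_fibRun_eq_empty hD hd hw hu hwu hA e.2
  obtain ⟨e₁, he₁⟩ := Finite.exists_max fun e => (κ e).length
  obtain ⟨e₀, he₀⟩ := Finite.exists_min fun e => wordProb M e.1.2 (κ e)
  let P : S → Set (Q × S) → Prop := fun s R =>
    ∃ x, Enabled M (d.2 :: x) ∧ s = x.getLastD d.2 ∧ R = fibRun 𝒜 D {d} x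
  have hP : ∀ s R t, P s R → 0 < M s t → P t (fibStep 𝒜 D R t) := by
    rintro _ _ t ⟨x, hx, rfl, rfl⟩ hst
    exact ⟨x ++ [t], hx.append (List.isChain_pair.2 hst), by simp,
      (fibRun_singleton_append _ x t).symm⟩
  refine tendsto_survival_atTop_zero hM P hP (N := (κ e₁).length + 1) (Nat.succ_pos _)
    (wordProb_pos (hκ e₀)) (wordProb_le_one hM _ _) ?_ ⟨[], List.isChain_singleton _, rfl, rfl⟩
  rintro _ _ ⟨x, hx, rfl, rfl⟩ ⟨p, hp⟩
  have hsnd := snd_eq_of_mem_fibRun_singleton hp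
  let e : D := ⟨p, fibRun_subset (Set.singleton_subset_iff.2 hd) x hp⟩
  exact ⟨κ e, (he₁ e).trans (Nat.le_succ _), hsnd ▸ he₀ e, hsnd ▸ hκ e, hkill e x hx hp⟩

end Enlargement

theorem stmt_4_general {Q S : Type} [Fintype Q] [Fintype S]
    (𝒜 : BA Q S) (M : Matrix S S ℝ) (hM : IsMarkov M)
    (hND : ¬ 𝒜.HasDiamond)
    (D : Set (Q × S)) (hD : IsSCC (Bmat 𝒜 M) D) (hrec : RecurrentSCC 𝒜 M D)
    (d : Q × S) (hd : d ∈ D)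
    (w : List S) (hwdef : Enabled M (d.2 :: w))
    (hnotcut : ¬ IsCut 𝒜 M D (fibRun 𝒜 D {d} w)) :
    (∃ (v : List S) (e : Q × S), e ∈ D ∧ e ≠ d ∧ Enabled M (d.2 :: v) ∧
       d ∈ fibRun 𝒜 D {d} v ∧ e ∈ fibRun 𝒜 D {d} v ∧ fibRun 𝒜 D {e} w ≠ ∅) ∧
    ∀ (v : List S) (e : Q × S), e ∈ D → e ≠ d → Enabled M (d.2 :: v) →
      d ∈ fibRun 𝒜 D {d} v → e ∈ fibRun 𝒜 D {d} v → fibRun 𝒜 D {e} w ≠ ∅ →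
      (fibRun 𝒜 D {d} w ∩ fibRun 𝒜 D {e} w = ∅ ∧
       fibRun 𝒜 D {d, e} w ⊆ fibRun 𝒜 D {d} (v ++ w) ∧
       fibRun 𝒜 D {d} w ⊂ fibRun 𝒜 D {d, e} w) := by
  refine ⟨?_, fun v e _ hne _ hdv hev hew => ?_⟩
  · by_contra! hnone
    obtain ⟨u, hu, hwu⟩ : ∃ u, Enabled M (w.getLastD d.2 :: u) ∧
        fibRun 𝒜 D (fibRun 𝒜 D {d} w) u = ∅ := by
      by_contra! h
      exact hnotcut ⟨d, hd, w, hwdef, rfl, fun u hu => (h u hu).ne_empty⟩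
    have hA v e (hne : e ≠ d) (hv : Enabled M (d.2 :: v)) (hdv : d ∈ fibRun 𝒜 D {d} v)
        (hev : e ∈ fibRun 𝒜 D {d} v) : fibRun 𝒜 D {e} w = ∅ :=
      hnone v e (fibRun_subset (Set.singleton_subset_iff.2 hd) v hev) hne hv hdv hev
    exact (specRad_lt_one_of_tendsto_survival hM hND hD hd
      (tendsto_survival_of_forall_fibRun_eq_empty hM hD hd hwdef hu hwu hA)).ne hrec
  · have hdisj := disjoint_fibRun_of_mem hND hdv hev hne.symm w
    have hsub : fibRun 𝒜 D {d} w ⊆ fibRun 𝒜 D {d, e} w := fibRun_mono (by simp) w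
    obtain ⟨p, hp⟩ := Set.nonempty_iff_ne_empty.2 hew
    refine ⟨hdisj.inter_eq, ?_, (Set.ssubset_iff_of_subset hsub).2 ⟨p, ?_, ?_⟩⟩
    · rw [fibRun_append]
      exact fibRun_mono (Set.insert_subset hdv (Set.singleton_subset_iff.2 hev)) w
    · exact fibRun_mono (by simp) w hp
    · exact fun hpd => Set.disjoint_left.1 hdisj hpd hp

/-- if `d ∈ d⇒w` is not a cut, one can enlarge it. -/
theorem stmt_4 {Q S : Type} [Fintype Q] [Fintype S]
    (𝒜 : BA Q S) (M : Matrix S S ℝ) (hM : IsMarkov M)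
    (hU : 𝒜.Unambiguous) (hND : ¬ 𝒜.HasDiamond) (hAR : 𝒜.AllReachable)
    (D : Set (Q × S)) (hD : IsSCC (Bmat 𝒜 M) D) (hrec : RecurrentSCC 𝒜 M D)
    (d : Q × S) (hd : d ∈ D)
    (w : List S) (hwdef : Enabled M (d.2 :: w))
    (hdin : d ∈ fibRun 𝒜 D {d} w)
    (hnotcut : ¬ IsCut 𝒜 M D (fibRun 𝒜 D {d} w)) :
    (∃ (v : List S) (e : Q × S), e ∈ D ∧ e ≠ d ∧ Enabled M (d.2 :: v) ∧
       d ∈ fibRun 𝒜 D {d} v ∧ e ∈ fibRun 𝒜 D {d} v ∧ fibRun 𝒜 D {e} w ≠ ∅) ∧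
    ∀ (v : List S) (e : Q × S), e ∈ D → e ≠ d → Enabled M (d.2 :: v) →
      d ∈ fibRun 𝒜 D {d} v → e ∈ fibRun 𝒜 D {d} v → fibRun 𝒜 D {e} w ≠ ∅ →
      (fibRun 𝒜 D {d} w ∩ fibRun 𝒜 D {e} w = ∅ ∧
       fibRun 𝒜 D {d, e} w ⊆ fibRun 𝒜 D {d} (v ++ w) ∧
       fibRun 𝒜 D {d} w ⊂ fibRun 𝒜 D {d, e} w) :=
  stmt_4_general 𝒜 M hM hND D hD hrec d hd w hwdef hnotcut
end

section
/- Let D be an accepting recurrent SCC of B, let d = ⟨q,s⟩ ∈ D, let y ∈ ℝ^D have strictly positive entries and satisfy B_{D,D} y = y, and let R(s) be a basis of V(s) such that every r ∈ R(s) equals Δ′(s)Δ(w_r)y for some w_r ∈ S* with s w_r enabled. Let w ∈ S* be such that s w is enabled and let (γ_r)_{r∈R(s)} be the (unique) real coefficients with Δ′(s)Δ(w)y = Σ_{r∈R(s)} γ_r r. Then Σ_{r∈R(s)} γ_r = 1. -/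
open Matrix MeasureTheory

attribute [local instance] Classical.propDecidable

/-! Let `μ` be a pseudo-cut over `s` with `μ ⬝ y ≠ 0`. Every `r ∈ R(s)` has the same shape as
`Δ′(s)Δ(w)y`, so `μ ⬝ r = μ ⬝ y`; applying `μ` to `Δ′(s)Δ(w)y = ∑ γ_r r` gives
`μ ⬝ y = (∑ γ_r) (μ ⬝ y)`.

Such a `μ` is a row `Δ(v)_d`. Since `B y = y`, the map `v ↦ Δ(v)_d ⬝ y` is a martingale for the
chain, and without diamonds `Δ(v)` is a 0/1 matrix, so the map takes finitely many values. At a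
maximiser `v`, the martingale property forces the maximum on every enabled continuation. Strong
connectivity then extends `v` back to the letter `s`. The maximum is at least `y_d > 0`. -/

theorem List.getLastD_append {α : Type*} (a : α) (v w : List α) :
    (v ++ w).getLastD a = w.getLastD (v.getLastD a) := by
  induction v generalizing a with
  | nil => rfl
  | cons b v ih => rw [List.cons_append, List.getLastD_cons, List.getLastD_cons, ih]

section Fibres

variable {Q S : Type} {𝒜 : BA Q S} {M : Matrix S S ℝ} {D : Set (Q × S)}

lemma enabled_cons_cons {a b : S} {l : List S} :
    Enabled M (a :: b :: l) ↔ 0 < M a b ∧ Enabled M (b :: l) :=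
  List.isChain_cons_cons

lemma Enabled.append_s10 {u : S} {v w : List S} (hv : Enabled M (u :: v))
    (hw : Enabled M (v.getLastD u :: w)) : Enabled M (u :: (v ++ w)) := by
  induction v generalizing u with
  | nil => exact hw
  | cons t v ih =>
    rw [enabled_cons_cons] at hv
    rw [List.getLastD_cons] at hw
    exact enabled_cons_cons.2 ⟨hv.1, ih hv.2 hw⟩

lemma delta_ne_zero_iff {t : S} {p p' : D} :
    Delta 𝒜 M D t p p' ≠ 0 ↔ (p' : Q × S).2 = t ∧ 0 < M (p : Q × S).2 t ∧
      (p' : Q × S).1 ∈ 𝒜.delta (p : Q × S).1 (p : Q × S).2 := by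
  simp [Delta]

lemma delta_eq_zero_or_one (t : S) (p p' : D) :
    Delta 𝒜 M D t p p' = 0 ∨ Delta 𝒜 M D t p p' = 1 := by
  simp only [Delta, of_apply]
  split_ifs <;> simp

lemma isRun_cons_of_delta_ne_zero {t : S} {v : List S} {p c p' : D} {ρ : List Q}
    (hδ : Delta 𝒜 M D t p c ≠ 0)
    (hρ : 𝒜.IsRun (c : Q × S).1 ((c : Q × S).2 :: v).dropLast ((c : Q × S).1 :: ρ)
      (p' : Q × S).1) :
    𝒜.IsRun (p : Q × S).1 ((p : Q × S).2 :: t :: v).dropLast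
      ((p : Q × S).1 :: (c : Q × S).1 :: ρ) (p' : Q × S).1 := by
  obtain ⟨hct, -, hq⟩ := delta_ne_zero_iff.1 hδ
  rw [hct] at hρ
  rw [List.dropLast_cons_cons]
  exact ⟨_, _, rfl, hq, hρ⟩

lemma subMat_bmat_apply [Fintype S] (hM : ∀ s t, 0 ≤ M s t) (p p' : D) :
    subMat (Bmat 𝒜 M) D p p' = ∑ t, M (p : Q × S).2 t * Delta 𝒜 M D t p p' := by
  rw [Finset.sum_eq_single (p' : Q × S).2 (fun t _ ht => by simp [Delta, Ne.symm ht]) (by simp)]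
  simp only [subMat, Bmat, Delta, submatrix_apply, of_apply, true_and]
  rcases (hM (p : Q × S).2 (p' : Q × S).2).lt_or_eq with hpos | hzero
  · split_ifs <;> simp_all
  · simp [← hzero]

variable [Fintype Q] [Fintype S]

lemma deltaW_append (v w : List S) :
    DeltaW 𝒜 M D (v ++ w) = DeltaW 𝒜 M D v * DeltaW 𝒜 M D w := by
  induction v with
  | nil => exact (one_mul _).symm
  | cons t v ih => rw [List.cons_append, DeltaW, DeltaW, ih, Matrix.mul_assoc]

lemma deltaW_singleton (t : S) : DeltaW 𝒜 M D [t] = Delta 𝒜 M D t := mul_one _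

lemma row_deltaW_append (v w : List S) (p : D) :
    DeltaW 𝒜 M D (v ++ w) p = DeltaW 𝒜 M D v p ᵥ* DeltaW 𝒜 M D w := by
  rw [deltaW_append]
  rfl

lemma snd_eq_getLastD_of_deltaW_ne_zero {v : List S} {p p' : D}
    (h : DeltaW 𝒜 M D v p p' ≠ 0) : (p' : Q × S).2 = v.getLastD (p : Q × S).2 := by
  induction v generalizing p with
  | nil =>
    obtain rfl : p = p' := by
      by_contra hne
      exact h (Matrix.one_apply_ne hne)
    rfl
  | cons t v ih =>
    obtain ⟨c, -, hc⟩ := Finset.exists_ne_zero_of_sum_ne_zero h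
    rw [List.getLastD_cons, ← (delta_ne_zero_iff.1 (left_ne_zero_of_mul hc)).1]
    exact ih (right_ne_zero_of_mul hc)

lemma exists_isRun_of_deltaW_ne_zero {v : List S} {p p' : D}
    (h : DeltaW 𝒜 M D v p p' ≠ 0) :
    ∃ ρ, 𝒜.IsRun (p : Q × S).1 ((p : Q × S).2 :: v).dropLast ((p : Q × S).1 :: ρ)
      (p' : Q × S).1 := by
  induction v generalizing p with
  | nil =>
    obtain rfl : p = p' := by
      by_contra hne
      exact h (Matrix.one_apply_ne hne)
    exact ⟨[], rfl, rfl⟩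
  | cons t v ih =>
    obtain ⟨c, -, hc⟩ := Finset.exists_ne_zero_of_sum_ne_zero h
    obtain ⟨ρ, hρ⟩ := ih (right_ne_zero_of_mul hc)
    exact ⟨_, isRun_cons_of_delta_ne_zero (left_ne_zero_of_mul hc) hρ⟩

lemma deltaW_eq_zero_or_one (hND : ¬ 𝒜.HasDiamond) (v : List S) (p p' : D) :
    DeltaW 𝒜 M D v p p' = 0 ∨ DeltaW 𝒜 M D v p p' = 1 := by
  induction v generalizing p with
  | nil => by_cases h : p = p' <;> simp [DeltaW, Matrix.one_apply, h]
  | cons t v ih =>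
    set term := fun c => Delta 𝒜 M D t p c * DeltaW 𝒜 M D v c p'
    have hterm : ∀ c, term c = 0 ∨ term c = 1 := fun c => by
      rcases delta_eq_zero_or_one (𝒜 := 𝒜) (M := M) t p c with h | h <;>
        rcases ih c with h' | h' <;> simp [term, h, h']
    by_cases hzero : ∀ c, term c = 0
    · left
      exact Finset.sum_eq_zero fun c _ => hzero c
    · obtain ⟨c, hc⟩ := not_forall.1 hzero
      -- two middle states `c ≠ c'` over the same letter `t` would give a diamond
      have huniq : ∀ c', c' ≠ c → term c' = 0 := by
        intro c' hne
        by_contra hc'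
        obtain ⟨ρ, hρ⟩ := exists_isRun_of_deltaW_ne_zero (right_ne_zero_of_mul hc)
        obtain ⟨ρ', hρ'⟩ := exists_isRun_of_deltaW_ne_zero (right_ne_zero_of_mul hc')
        have hsnd : (c' : Q × S).2 = (c : Q × S).2 :=
          (delta_ne_zero_iff.1 (left_ne_zero_of_mul hc')).1.trans
            (delta_ne_zero_iff.1 (left_ne_zero_of_mul hc)).1.symm
        have hfst : (c' : Q × S).1 ≠ (c : Q × S).1 :=
          fun hq => hne (Subtype.ext (Prod.ext hq hsnd))
        exact hND ⟨_, _, _, _, _, fun h => hfst (List.cons.inj (List.cons.inj h).2).1,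
          isRun_cons_of_delta_ne_zero (left_ne_zero_of_mul hc') hρ',
          isRun_cons_of_delta_ne_zero (left_ne_zero_of_mul hc) hρ⟩
      rw [DeltaW, Matrix.mul_apply, Finset.sum_eq_single c (fun c' _ => huniq c') (by simp)]
      exact hterm c

lemma vecMul_subMat_bmat_of_fibre (hM : ∀ s t, 0 ≤ M s t) {μ : D → ℝ} {u : S}
    (hμ : ∀ p, μ p ≠ 0 → (p : Q × S).2 = u) :
    μ ᵥ* subMat (Bmat 𝒜 M) D = ∑ t, M u t • μ ᵥ* Delta 𝒜 M D t := by
  ext p'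
  simp only [vecMul, dotProduct, Finset.sum_apply, Pi.smul_apply, smul_eq_mul, Finset.mul_sum]
  rw [Finset.sum_comm]
  refine Finset.sum_congr rfl fun p _ => ?_
  by_cases h : μ p = 0
  · simp [h]
  · rw [subMat_bmat_apply hM, ← hμ p h, Finset.mul_sum]
    exact Finset.sum_congr rfl fun t _ => by ring

lemma dotProduct_deltaW_eq_sum (hM : ∀ s t, 0 ≤ M s t) {y : D → ℝ}
    (heig : subMat (Bmat 𝒜 M) D *ᵥ y = y) (p : D) (v : List S) :
    DeltaW 𝒜 M D v p ⬝ᵥ y =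
      ∑ t, M (v.getLastD (p : Q × S).2) t * (DeltaW 𝒜 M D (v ++ [t]) p ⬝ᵥ y) := by
  conv_lhs => rw [← heig]
  rw [dotProduct_mulVec,
    vecMul_subMat_bmat_of_fibre hM fun _ h => snd_eq_getLastD_of_deltaW_ne_zero h,
    sum_dotProduct]
  refine Finset.sum_congr rfl fun t _ => ?_
  rw [smul_dotProduct, smul_eq_mul, row_deltaW_append, deltaW_singleton]

end Fibres

lemma eq_of_sum_mul_eq_of_le {ι : Type*} [Fintype ι] {π x : ι → ℝ} {c : ℝ}
    (hπ : ∀ i, 0 ≤ π i) (hsum : ∑ i, π i = 1) (hx : ∀ i, x i ≤ c)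
    (havg : ∑ i, π i * x i = c) {i : ι} (hi : 0 < π i) : x i = c := by
  have hgap : ∑ j, π j * (c - x j) = 0 := by
    simp only [mul_sub, Finset.sum_sub_distrib, ← Finset.sum_mul, hsum, havg, one_mul, sub_self]
  have hi' := (Finset.sum_eq_zero_iff_of_nonneg fun j _ =>
    mul_nonneg (hπ j) (sub_nonneg.2 (hx j))).1 hgap i (Finset.mem_univ i)
  linarith [(mul_eq_zero.1 hi').resolve_left hi.ne']

lemma IsMarkov.eq_of_harmonic_of_isMax {S : Type} [Fintype S] {M : Matrix S S ℝ}
    (hM : IsMarkov M) {s : S} {h : List S → ℝ} {β : ℝ}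
    (hharm : ∀ v, h v = ∑ t, M (v.getLastD s) t * h (v ++ [t])) (hle : ∀ v, h v ≤ β)
    (w : List S) {v : List S} (hv : h v = β) (hw : Enabled M (v.getLastD s :: w)) :
    h (v ++ w) = β := by
  induction w generalizing v with
  | nil => simpa using hv
  | cons t w ih =>
    obtain ⟨ht, hw⟩ := enabled_cons_cons.1 hw
    have hvt : h (v ++ [t]) = β :=
      eq_of_sum_mul_eq_of_le (x := fun t => h (v ++ [t])) (hM.1 _) (hM.2 _) (fun _ => hle _)
        (by rw [← hharm, hv]) ht
    simpa using ih hvt (by rwa [List.getLastD_concat])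

lemma exists_enabled_of_reflTransGen {Q S : Type} {𝒜 : BA Q S} {M : Matrix S S ℝ}
    {p p' : Q × S} (h : Relation.ReflTransGen (fun a b => 0 < Bmat 𝒜 M a b) p p') :
    ∃ w, Enabled M (p.2 :: w) ∧ w.getLastD p.2 = p'.2 := by
  induction h using Relation.ReflTransGen.head_induction_on with
  | refl => exact ⟨[], List.isChain_singleton _, rfl⟩
  | @head q q' hpc _ ih =>
    obtain ⟨w, hw, hlast⟩ := ih
    have hM : 0 < M q.2 q'.2 := by
      simp only [Bmat, of_apply] at hpc
      split_ifs at hpc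
      · exact hpc
      · exact absurd hpc (lt_irrefl 0)
    exact ⟨_ :: w, enabled_cons_cons.2 ⟨hM, hw⟩, by rwa [List.getLastD_cons]⟩

section PseudoCut

variable {Q S : Type} [Fintype Q] [Fintype S] {𝒜 : BA Q S} {M : Matrix S S ℝ}
  {D : Set (Q × S)} {y : D → ℝ}

lemma vecMul_delta'_of_isFibreVec {μ : D → ℝ} {s : S} (hμ : IsFibreVec D μ s) :
    μ ᵥ* Delta' D s = μ := by
  ext p
  simp only [vecMul, dotProduct, Delta', of_apply]
  rw [Finset.sum_eq_single p (fun _ _ hne => by simp [hne]) (by simp)]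
  by_cases hp : (p : Q × S).2 = s
  · simp [hp]
  · simp [hp, hμ p hp]

lemma IsPseudoCut.dotProduct_delta'_mul_deltaW {μ : D → ℝ} {s : S}
    (hμ : IsPseudoCut 𝒜 M D y μ s) {w : List S} (hw : Enabled M (s :: w)) :
    μ ⬝ᵥ (Delta' D s * DeltaW 𝒜 M D w) *ᵥ y = μ ⬝ᵥ y := by
  rw [dotProduct_mulVec, ← vecMul_vecMul, vecMul_delta'_of_isFibreVec hμ.1,
    ← dotProduct_mulVec, hμ.2 w hw]

theorem exists_isPseudoCut (hM : IsMarkov M) (hND : ¬ 𝒜.HasDiamond)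
    (hD : IsSCC (Bmat 𝒜 M) D) (heig : subMat (Bmat 𝒜 M) D *ᵥ y = y) (p : D) (hy : 0 < y p) :
    ∃ μ, IsPseudoCut 𝒜 M D y μ (p : Q × S).2 ∧ 0 < μ ⬝ᵥ y := by
  set s := (p : Q × S).2
  set h : List S → ℝ := fun v => DeltaW 𝒜 M D v p ⬝ᵥ y
  have hfin : (Set.range fun v => DeltaW 𝒜 M D v p).Finite :=
    (Set.Finite.pi (t := fun _ => ({0, 1} : Set ℝ)) fun _ => Set.toFinite _).subset
      (by rintro _ ⟨v, rfl⟩ p' -; exact deltaW_eq_zero_or_one hND v p p')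
  obtain ⟨_, ⟨v₀, rfl⟩, hmax⟩ := Set.exists_max_image _ (· ⬝ᵥ y) hfin (Set.range_nonempty _)
  have hle : ∀ v, h v ≤ h v₀ := fun v => hmax _ ⟨v, rfl⟩
  have hnil : h [] = y p := by simp [h, DeltaW, dotProduct, Matrix.one_apply]
  have hpos : 0 < h v₀ := hy.trans_le (hnil ▸ hle [])
  have hflat : ∀ w, Enabled M (v₀.getLastD s :: w) → h (v₀ ++ w) = h v₀ := fun w hw =>
    hM.eq_of_harmonic_of_isMax (dotProduct_deltaW_eq_sum hM.1 heig p) hle w rfl hw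
  obtain ⟨e, he⟩ : ∃ e, DeltaW 𝒜 M D v₀ p e ≠ 0 := by
    by_contra! h0
    simp [h, dotProduct, h0] at hpos
  obtain ⟨c, hc⟩ := hD
  have hreach : ∀ q : D, _ := fun q => (Set.ext_iff.1 hc q).1 q.2
  obtain ⟨w₂, hw₂, hlast⟩ := exists_enabled_of_reflTransGen ((hreach e).2.trans (hreach p).1)
  rw [snd_eq_getLastD_of_deltaW_ne_zero he] at hw₂ hlast
  refine ⟨DeltaW 𝒜 M D (v₀ ++ w₂) p, ⟨fun e' he' => ?_, fun w hw => ?_⟩, ?_⟩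
  · by_contra hne
    exact he' (by rw [snd_eq_getLastD_of_deltaW_ne_zero hne, List.getLastD_append, hlast])
  · calc DeltaW 𝒜 M D (v₀ ++ w₂) p ⬝ᵥ DeltaW 𝒜 M D w *ᵥ y = h (v₀ ++ (w₂ ++ w)) := by
          rw [dotProduct_mulVec, ← row_deltaW_append, List.append_assoc]
      _ = h v₀ := hflat _ (hw₂.append_s10 (by rwa [hlast]))
      _ = h (v₀ ++ w₂) := (hflat _ hw₂).symm
  · exact hpos.trans_eq (hflat _ hw₂).symm

end PseudoCut

theorem sum_coeff_eq_one_of_isPseudoCut {Q S : Type} [Fintype Q] [Fintype S] {𝒜 : BA Q S}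
    {M : Matrix S S ℝ} {D : Set (Q × S)} {y μ : D → ℝ} {s : S}
    (hμ : IsPseudoCut 𝒜 M D y μ s) (hμy : μ ⬝ᵥ y ≠ 0) {R : Finset (D → ℝ)}
    (hform : ∀ r ∈ R, ∃ w : List S, Enabled M (s :: w) ∧
      r = (Delta' D s * DeltaW 𝒜 M D w) *ᵥ y)
    {w : List S} (hw : Enabled M (s :: w)) {γ : (D → ℝ) → ℝ}
    (hγ : (Delta' D s * DeltaW 𝒜 M D w) *ᵥ y = ∑ r ∈ R, γ r • r) :
    ∑ r ∈ R, γ r = 1 := by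
  have hr : ∀ r ∈ R, μ ⬝ᵥ γ r • r = γ r * (μ ⬝ᵥ y) := by
    intro r hr
    obtain ⟨w', hw', rfl⟩ := hform r hr
    rw [dotProduct_smul, smul_eq_mul, hμ.dotProduct_delta'_mul_deltaW hw']
  have key := hμ.dotProduct_delta'_mul_deltaW hw
  rw [hγ, dotProduct_sum, Finset.sum_congr rfl hr, ← Finset.sum_mul] at key
  exact (mul_eq_right₀ hμy).1 key

theorem stmt_10_general {Q S : Type} [Fintype Q] [Fintype S]
    (𝒜 : BA Q S) (M : Matrix S S ℝ) (hM : IsMarkov M)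
    (hND : ¬ 𝒜.HasDiamond)
    (D : Set (Q × S)) (hD : IsSCC (Bmat 𝒜 M) D)
    (d : Q × S) (hd : d ∈ D)
    (y : ↥D → ℝ) (hypos : ∀ p, 0 < y p)
    (heig : (subMat (Bmat 𝒜 M) D).mulVec y = y)
    (R : Finset (↥D → ℝ))
    (hform : ∀ r ∈ R, ∃ w : List S, Enabled M (d.2 :: w) ∧
      r = (Delta' D d.2 * DeltaW 𝒜 M D w).mulVec y)
    (w : List S) (hw : Enabled M (d.2 :: w))
    (γ : (↥D → ℝ) → ℝ)
    (hγ : (Delta' D d.2 * DeltaW 𝒜 M D w).mulVec y = ∑ r ∈ R, γ r • r) :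
    ∑ r ∈ R, γ r = 1 := by
  obtain ⟨μ, hμ, hpos⟩ := exists_isPseudoCut hM hND hD heig ⟨d, hd⟩ (hypos _)
  exact sum_coeff_eq_one_of_isPseudoCut hμ hpos.ne' hform hw hγ

/-- the coefficients of `Δ′(s)Δ(w)y` over the basis `R(s)` sum to `1`. -/
theorem stmt_10 {Q S : Type} [Fintype Q] [Fintype S]
    (𝒜 : BA Q S) (M : Matrix S S ℝ) (hM : IsMarkov M)
    (hU : 𝒜.Unambiguous) (hND : ¬ 𝒜.HasDiamond) (hAR : 𝒜.AllReachable)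
    (D : Set (Q × S)) (hD : IsSCC (Bmat 𝒜 M) D)
    (hrec : RecurrentSCC 𝒜 M D) (hacc : AcceptingSCC 𝒜 D)
    (d : Q × S) (hd : d ∈ D)
    (y : ↥D → ℝ) (hypos : ∀ p, 0 < y p)
    (heig : (subMat (Bmat 𝒜 M) D).mulVec y = y)
    (R : Finset (↥D → ℝ))
    (hind : LinearIndependent ℝ (fun r : {x // x ∈ R} => (r : ↥D → ℝ)))
    (hspan : Submodule.span ℝ (↑R : Set (↥D → ℝ)) = Vspace 𝒜 M D y d.2)
    (hform : ∀ r ∈ R, ∃ w : List S, Enabled M (d.2 :: w) ∧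
      r = (Delta' D d.2 * DeltaW 𝒜 M D w).mulVec y)
    (w : List S) (hw : Enabled M (d.2 :: w))
    (γ : (↥D → ℝ) → ℝ)
    (hγ : (Delta' D d.2 * DeltaW 𝒜 M D w).mulVec y = ∑ r ∈ R, γ r • r) :
    ∑ r ∈ R, γ r = 1 :=
  stmt_10_general 𝒜 M hM hND D hD d hd y hypos heig R hform w hw γ hγ
end
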